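/- For all integers n ≥ 0 and k ≥ 1, the cardinality of R̄D_{n+2,k} equals the cardinality of RHD_{n+1,k−1}. -/

import Mathlib

open Finset

/-- The number of descents of a permutation of `{1, …, m+1}`. -/
def des {m : ℕ} (π : Equiv.Perm (Fin (m + 1))) : ℕ :=
  (Finset.univ.filter fun i : Fin m => π i.succ < π i.castSucc).card

/-- The set `𝒬_{m+1}` of permutations of `{1, …, m+1}` whose largest entry appears
as the first descent (the identity permutation is included). -/
def Qset (m : ℕ) : Finset (Equiv.Perm (Fin (m + 1))) :=
  Finset.univ.filter fun π =>
    ∀ i : Fin m, i.succ ≤ π⁻¹ (Fin.last m) → π i.castSucc < π i.succ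

/-- Condition (3) in the definition of `R̄D`: with `a = π⁻¹(1)` (smallest entry is
`0 : Fin (m+1)`, positions `0`-indexed), either `a` is the last position, or `a` is
an interior position and `π(a-1) < π(a+1)`. -/
def rdbarCond {m : ℕ} (π : Equiv.Perm (Fin (m + 1))) : Prop :=
  π⁻¹ 0 = Fin.last m ∨ ∃ j : ℕ, ∃ h : j + 2 ≤ m,
    (π⁻¹ 0 : ℕ) = j + 1 ∧ π ⟨j, by omega⟩ < π ⟨j + 2, by omega⟩

open scoped Classical in
/-- `R̄D_{m+1,k}`: permutations `π` of `{1, …, m+1}` with `π ∈ 𝒬_{m+1}`, `des π = k`,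
and, with `a = π⁻¹(1)`, either `a = m+1` or `π(a-1) < π(a+1)`. -/
noncomputable def RDbar (m k : ℕ) : Finset (Equiv.Perm (Fin (m + 1))) :=
  (Qset m).filter fun π => des π = k ∧ rdbarCond π

/-- `RHD_{n+1,k-1}` (for `k ≥ 1`, here as `RHD n k`): pairs `(π, i)` with
`π ∈ 𝒬_{n+1}`, `des π = k - 1`, `i ∈ {1, …, n - k + 2}`, and `i > π⁻¹(n+1) - 1`,
where `π⁻¹(n+1)` is the (`1`-indexed) position of the largest entry. -/
def RHD (n k : ℕ) : Finset (Equiv.Perm (Fin (n + 1)) × ℕ) :=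
  (Qset n ×ˢ Finset.Icc 1 (n + 2 - k)).filter fun p =>
    des p.1 = k - 1 ∧ (p.1⁻¹ (Fin.last n) : ℕ) < p.2

/-!
Removing the entry `1` maps `R̄D_{n+2,k}` bijectively onto the pairs `(π, p)` with
`π ∈ QD_{n+1,k-1}` and `p` a slot of `π` lying after the entry `n + 1` (otherwise `1` would
come before the maximum and break the increasing prefix) which is either the last slot or sits
inside an ascent of `π` (condition (3)), so that exactly the descent into `1` is lost.
All descents of `π ∈ 𝒬_{n+1}` lie after its maximum, at `0`-indexed position `M`, so exactly
`des π = k - 1` of the `n + 1 - M` slots after the maximum fail, leaving `n - k + 2 - M` slots: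
as many as the `i ∈ {M + 1, …, n - k + 2}` that pair with `π` in `RHD_{n+1,k-1}`.
-/

open Equiv

theorem Equiv.optionCongr_removeNone {α β : Type*} {e : Option α ≃ Option β}
    (h : e none = none) : optionCongr (removeNone e) = e := by
  ext1 x
  cases x with
  | none => simp [h]
  | some x =>
    obtain ⟨y, hy⟩ := Option.ne_none_iff_exists'.mp
      fun hx => Option.some_ne_none x (e.injective (hx.trans h.symm))
    simp [← removeNone_some e ⟨y, hy⟩]

section Entries

variable {m : ℕ}

/-- The entry of `π` at position `i`, as a natural number; `0` when `i` is out of range. -/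
def entry (π : Perm (Fin m)) (i : ℕ) : ℕ :=
  if h : i < m then π ⟨i, h⟩ else 0

theorem entry_of_lt (π : Perm (Fin m)) {i : ℕ} (h : i < m) : entry π i = π ⟨i, h⟩ :=
  dif_pos h

theorem entry_coe (π : Perm (Fin m)) (i : Fin m) : entry π i = π i :=
  dif_pos i.isLt

theorem entry_inj (π : Perm (Fin m)) {i j : ℕ} (hi : i < m) (hj : j < m) :
    entry π i = entry π j ↔ i = j := by
  rw [entry_of_lt π hi, entry_of_lt π hj, Fin.val_inj, π.apply_eq_iff_eq, Fin.mk.injEq]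

end Entries

section MaxPos

variable {m : ℕ} (π : Perm (Fin (m + 1)))

def maxPos : ℕ := π⁻¹ (Fin.last m)

theorem maxPos_lt : maxPos π < m + 1 := (π⁻¹ (Fin.last m)).isLt

theorem entry_maxPos : entry π (maxPos π) = m := by
  simp [maxPos, entry_coe]

theorem maxPos_eq_of_entry_eq {i : ℕ} (hi : i < m + 1) (h : entry π i = m) : maxPos π = i := by
  rw [← entry_inj π (maxPos_lt π) hi, entry_maxPos, h]

def descentSet : Finset ℕ := (Finset.range m).filter fun i => entry π (i + 1) < entry π i

theorem mem_descentSet {i : ℕ} : i ∈ descentSet π ↔ i < m ∧ entry π (i + 1) < entry π i := by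
  rw [descentSet, Finset.mem_filter, Finset.mem_range]

theorem des_eq_card_descentSet : des π = (descentSet π).card := by
  classical
  rw [des, descentSet, Finset.card_filter, Finset.card_filter, ← Fin.sum_univ_eq_sum_range]
  refine Finset.sum_congr rfl fun i _ => ?_
  rw [show entry π (i + 1) = π i.succ from entry_coe π i.succ,
    show entry π i = π i.castSucc from entry_coe π i.castSucc]
  rfl

theorem mem_Qset_iff_entry :
    π ∈ Qset m ↔ ∀ i, i + 1 ≤ maxPos π → entry π i < entry π (i + 1) := by
  simp only [Qset, Finset.mem_filter, Finset.mem_univ, true_and]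
  constructor
  · intro h i hi
    have him : i < m := by have := maxPos_lt π; omega
    simpa [entry_of_lt π (Nat.lt_succ_of_lt him), entry_of_lt π (Nat.succ_lt_succ him)] using
      h ⟨i, him⟩ (Fin.le_def.mpr hi)
  · intro h i hi
    have := h i (Fin.le_def.mp hi)
    rwa [show entry π (i + 1) = π i.succ from entry_coe π i.succ,
      show entry π i = π i.castSucc from entry_coe π i.castSucc] at this

theorem maxPos_le_of_mem_descentSet (hπ : π ∈ Qset m) {i : ℕ} (hi : i ∈ descentSet π) :
    maxPos π ≤ i := by
  rw [mem_descentSet] at hi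
  by_contra h
  have := (mem_Qset_iff_entry π).mp hπ i (by omega)
  omega

theorem rdbarCond_iff_entry :
    rdbarCond π ↔ (π⁻¹ 0 : ℕ) = m ∨
      1 ≤ (π⁻¹ 0 : ℕ) ∧ (π⁻¹ 0 : ℕ) + 1 ≤ m ∧
        entry π ((π⁻¹ 0 : ℕ) - 1) < entry π ((π⁻¹ 0 : ℕ) + 1) := by
  rw [rdbarCond, Fin.ext_iff, Fin.val_last]
  refine or_congr Iff.rfl ⟨?_, ?_⟩
  · rintro ⟨j, hj, ha, hlt⟩
    rw [ha, Nat.add_sub_cancel, entry_of_lt π (by omega), entry_of_lt π (by omega)]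
    exact ⟨by omega, by omega, hlt⟩
  · rintro ⟨h1, h2, hlt⟩
    refine ⟨(π⁻¹ 0 : ℕ) - 1, by omega, by omega, ?_⟩
    rw [entry_of_lt π (by omega), entry_of_lt π (by omega)] at hlt
    rw [Fin.lt_def]
    convert hlt using 3
    ext
    simp only
    omega
    

/-- Slot `p`, where a new entry would sit between positions `p - 1` and `p`, is the last one
or lies inside an ascent of `π`. -/
def IsAscentSlot (p : ℕ) : Prop :=
  p = m + 1 ∨ 1 ≤ p ∧ p ≤ m ∧ entry π (p - 1) < entry π p

end MaxPos

section Insertion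

variable {n : ℕ}

/-- Insert a new smallest entry at position `p`, shifting the entries of `π` up by one. -/
def insertMin (π : Perm (Fin (n + 1))) (p : Fin (n + 2)) : Perm (Fin (n + 2)) :=
  (finSuccEquiv' p).trans ((optionCongr π).trans (finSuccEquiv' 0).symm)

theorem insertMin_apply_self (π : Perm (Fin (n + 1))) (p : Fin (n + 2)) :
    insertMin π p p = 0 := by
  simp [insertMin, finSuccEquiv'_at]

theorem insertMin_inv_zero (π : Perm (Fin (n + 1))) (p : Fin (n + 2)) :
    (insertMin π p)⁻¹ 0 = p := by
  rw [← insertMin_apply_self π p, Perm.coe_inv, symm_apply_apply]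

def insertMinEquiv : Perm (Fin (n + 1)) × Fin (n + 2) ≃ Perm (Fin (n + 2)) where
  toFun q := insertMin q.1 q.2
  invFun σ := (removeNone ((finSuccEquiv' (σ⁻¹ 0)).symm.trans (σ.trans (finSuccEquiv' 0))), σ⁻¹ 0)
  left_inv := by
    rintro ⟨π, p⟩
    ext1
    · dsimp only
      rw [insertMin_inv_zero]
      convert removeNone_optionCongr π
      ext1 x
      simp [insertMin]
    · exact insertMin_inv_zero π p
  right_inv σ := by
    dsimp only
    rw [insertMin, optionCongr_removeNone (by simp [finSuccEquiv'_at])]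
    ext1 x
    simp

theorem entry_insertMin_of_lt (π : Perm (Fin (n + 1))) {p : Fin (n + 2)} {x : ℕ}
    (hx : x < p) : entry (insertMin π p) x = entry π x + 1 := by
  have hx1 : x < n + 1 := by omega
  rw [entry_of_lt _ (by omega), entry_of_lt π hx1,
    show (⟨x, _⟩ : Fin (n + 2)) = Fin.castSucc ⟨x, hx1⟩ from rfl, insertMin,
    trans_apply, finSuccEquiv'_below (by simpa [Fin.lt_def] using hx)]
  simp [finSuccEquiv'_symm_some_above (Fin.zero_le _)]

theorem entry_insertMin_self (π : Perm (Fin (n + 1))) (p : Fin (n + 2)) :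
    entry (insertMin π p) p = 0 := by
  rw [entry_coe, insertMin_apply_self, Fin.val_zero]

theorem entry_insertMin_of_gt (π : Perm (Fin (n + 1))) {p : Fin (n + 2)} {x : ℕ}
    (hx : p < x) (hx2 : x < n + 2) : entry (insertMin π p) x = entry π (x - 1) + 1 := by
  have hx1 : x - 1 < n + 1 := by omega
  rw [entry_of_lt _ hx2, entry_of_lt π hx1,
    show (⟨x, hx2⟩ : Fin (n + 2)) = Fin.succ ⟨x - 1, hx1⟩ from Fin.ext (by simp; omega),
    insertMin, trans_apply, finSuccEquiv'_above (by simp [Fin.le_def]; omega)]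
  simp [finSuccEquiv'_symm_some_above (Fin.zero_le _)]

variable (π : Perm (Fin (n + 1))) {p : Fin (n + 2)}

theorem maxPos_insertMin_of_lt (h : maxPos π < p) : maxPos (insertMin π p) = maxPos π :=
  maxPos_eq_of_entry_eq _ (by have := maxPos_lt π; omega)
    (by rw [entry_insertMin_of_lt π h, entry_maxPos])

theorem maxPos_insertMin_of_le (h : p ≤ maxPos π) : maxPos (insertMin π p) = maxPos π + 1 :=
  maxPos_eq_of_entry_eq _ (by have := maxPos_lt π; omega)
    (by rw [entry_insertMin_of_gt π (by omega) (by have := maxPos_lt π; omega),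
      Nat.add_sub_cancel, entry_maxPos])

theorem insertMin_mem_Qset_iff (hp : 1 ≤ (p : ℕ)) :
    insertMin π p ∈ Qset (n + 1) ↔ π ∈ Qset n ∧ maxPos π < p := by
  by_cases h : maxPos π < p
  · simp only [h, and_true, mem_Qset_iff_entry, maxPos_insertMin_of_lt π h]
    refine forall₂_congr fun i hi => ?_
    rw [entry_insertMin_of_lt π (by omega), entry_insertMin_of_lt π (by omega),
      Nat.add_lt_add_iff_right]
  · simp only [h, and_false, iff_false, mem_Qset_iff_entry,
      maxPos_insertMin_of_le π (not_lt.mp h)]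
    intro hQ
    have := hQ (p - 1) (by omega)
    rw [Nat.sub_add_cancel hp, entry_insertMin_self] at this
    exact Nat.not_lt_zero _ this

theorem rdbarCond_insertMin_iff : rdbarCond (insertMin π p) ↔ IsAscentSlot π p := by
  rw [rdbarCond_iff_entry, insertMin_inv_zero, IsAscentSlot]
  refine or_congr Iff.rfl (and_congr_right fun hp => ?_)
  rw [Nat.add_le_add_iff_right]
  refine and_congr_right fun hpn => ?_
  rw [entry_insertMin_of_lt π (by omega), entry_insertMin_of_gt π (by omega) (by omega),
    Nat.add_sub_cancel, Nat.add_lt_add_iff_right]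

theorem descentSet_insertMin (h : IsAscentSlot π p) :
    descentSet (insertMin π p) = insert ((p : ℕ) - 1)
      ((descentSet π).image fun i : ℕ => if i < (p : ℕ) then i else i + 1) := by
  have hp := p.isLt
  unfold IsAscentSlot at h
  ext i
  simp only [Finset.mem_insert, Finset.mem_image, mem_descentSet]
  rcases lt_trichotomy (i + 1) p with hi | hi | hi
  · rw [entry_insertMin_of_lt π hi, entry_insertMin_of_lt π (by omega), Nat.add_lt_add_iff_right]
    constructor
    · exact fun ⟨_, hlt⟩ => Or.inr ⟨i, ⟨by omega, hlt⟩, if_pos (by omega)⟩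
    · rintro (h' | ⟨j, ⟨hj, hlt⟩, rfl⟩)
      · omega
      · split_ifs at hi ⊢
        · exact ⟨by omega, hlt⟩
        · omega
  · rw [hi, entry_insertMin_self, entry_insertMin_of_lt π (by omega)]
    exact iff_of_true ⟨by omega, by omega⟩ (Or.inl (by omega))
  · rcases Nat.lt_or_ge i (n + 1) with hin | hin
    · rcases eq_or_lt_of_le (Nat.le_of_lt_succ hi) with rfl | hpi
      · rw [entry_insertMin_self]
        refine iff_of_false (by omega) ?_
        rintro (h' | ⟨a, -, ha⟩)
        · omega
        · split_ifs at ha <;> omega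
      · rw [entry_insertMin_of_gt π (by omega) (by omega), Nat.add_sub_cancel,
          entry_insertMin_of_gt π hpi (by omega), Nat.add_lt_add_iff_right]
        constructor
        · rintro ⟨-, hlt⟩
          refine Or.inr ⟨i - 1, ⟨by omega, by rwa [Nat.sub_add_cancel (by omega)]⟩, ?_⟩
          rw [if_neg (by omega)]
          omega
        · rintro (h' | ⟨a, ⟨ha, hlt⟩, rfl⟩)
          · omega
          · split_ifs at hpi ⊢
            · omega
            · exact ⟨by omega, by rwa [Nat.add_sub_cancel]⟩
    · refine iff_of_false (by omega) ?_
      rintro (h' | ⟨a, ⟨ha, -⟩, rfl⟩)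
      · omega
      · split_ifs at hin <;> omega

theorem des_insertMin (h : IsAscentSlot π p) : des (insertMin π p) = des π + 1 := by
  rw [des_eq_card_descentSet, des_eq_card_descentSet, descentSet_insertMin π h,
    Finset.card_insert_of_notMem, Finset.card_image_of_injOn]
  · intro i _ j _ hij
    dsimp only at hij
    split_ifs at hij <;> omega
  · simp only [Finset.mem_image, mem_descentSet, not_exists, not_and]
    intro i hi hip
    split_ifs at hip
    · rcases h with h' | ⟨h1, -, hlt⟩
      · omega
      · rw [hip, Nat.sub_add_cancel h1] at hi
        omega
    · omega

end Insertion

section Counting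

variable {n : ℕ} (π : Perm (Fin (n + 1)))

theorem insertMin_mem_RDbar_iff {k : ℕ} (hk : 1 ≤ k) (p : Fin (n + 2)) :
    insertMin π p ∈ RDbar (n + 1) k ↔
      π ∈ Qset n ∧ des π = k - 1 ∧ maxPos π < p ∧ IsAscentSlot π p := by
  classical
  rw [RDbar, Finset.mem_filter, rdbarCond_insertMin_iff]
  constructor
  · rintro ⟨hQ, hd, hr⟩
    have hp : 1 ≤ (p : ℕ) := by unfold IsAscentSlot at hr; omega
    obtain ⟨hπ, hM⟩ := (insertMin_mem_Qset_iff π hp).mp hQ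
    rw [des_insertMin π hr] at hd
    exact ⟨hπ, by omega, hM, hr⟩
  · rintro ⟨hπ, hd, hM, hr⟩
    refine ⟨(insertMin_mem_Qset_iff π (by omega)).mpr ⟨hπ, hM⟩, ?_, hr⟩
    rw [des_insertMin π hr]
    omega

open scoped Classical in
theorem card_filter_isAscentSlot (hπ : π ∈ Qset n) :
    ((Finset.range (n + 2)).filter fun p => maxPos π < p ∧ IsAscentSlot π p).card =
      n + 1 - maxPos π - des π := by
  have hM := maxPos_lt π
  have hsplit := Finset.card_filter_add_card_filter_not (s := Finset.Ioc (maxPos π) (n + 1))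
    (p := IsAscentSlot π)
  have hslots : (Finset.range (n + 2)).filter (fun p => maxPos π < p ∧ IsAscentSlot π p) =
      (Finset.Ioc (maxPos π) (n + 1)).filter (IsAscentSlot π) := by
    ext p
    simp only [Finset.mem_filter, Finset.mem_range, Finset.mem_Ioc]
    exact ⟨fun ⟨hp, hM, h⟩ => ⟨⟨hM, by omega⟩, h⟩, fun ⟨⟨hM, hp⟩, h⟩ => ⟨by omega, hM, h⟩⟩
  -- all descents lie after the maximum, so the other slots after it are those one past a descent
  have hbad : (Finset.Ioc (maxPos π) (n + 1)).filter (fun p => ¬IsAscentSlot π p) =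
      (descentSet π).map (addRightEmbedding 1) := by
    ext p
    simp only [Finset.mem_filter, Finset.mem_Ioc, Finset.mem_map, addRightEmbedding_apply,
      mem_descentSet]
    unfold IsAscentSlot
    constructor
    · rintro ⟨⟨h1, h2⟩, h3⟩
      have hne := (entry_inj π (i := p - 1) (j := p) (by omega) (by omega)).not.mpr (by omega)
      refine ⟨p - 1, ⟨by omega, ?_⟩, by omega⟩
      rw [Nat.sub_add_cancel (by omega)]
      omega
    · rintro ⟨i, hi, rfl⟩
      have := maxPos_le_of_mem_descentSet π hπ ((mem_descentSet π).mpr hi)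
      rw [Nat.add_sub_cancel]
      omega
  rw [hbad, Finset.card_map, ← des_eq_card_descentSet, Nat.card_Ioc] at hsplit
  rw [hslots]
  omega

end Counting

theorem card_RDbar_eq_card_RHD (n k : ℕ) (hk : 1 ≤ k) :
    (RDbar (n + 1) k).card = (RHD n k).card := by
  classical
  rw [← Finset.card_equiv insertMinEquiv (s := (Qset n ×ˢ Finset.univ).filter
      fun q => des q.1 = k - 1 ∧ maxPos q.1 < q.2 ∧ IsAscentSlot q.1 q.2) fun q => ?_,
    RHD, Finset.card_filter, Finset.card_filter, Finset.sum_product, Finset.sum_product]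
  · refine Finset.sum_congr rfl fun π hπ => ?_
    rw [Fin.sum_univ_eq_sum_range
        (fun p => if des π = k - 1 ∧ maxPos π < p ∧ IsAscentSlot π p then 1 else 0),
      ← Finset.card_filter, ← Finset.card_filter]
    by_cases hd : des π = k - 1
    · have hIcc : (Finset.Icc 1 (n + 2 - k)).filter (maxPos π < ·) =
          Finset.Icc (maxPos π + 1) (n + 2 - k) := by
        ext
        simp only [Finset.mem_filter, Finset.mem_Icc]
        omega
      simp only [hd, true_and]
      rw [card_filter_isAscentSlot π hπ, hd]
      rw [← maxPos, hIcc, Nat.card_Icc]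
      omega
    · simp [hd]
  · simp only [Finset.mem_filter, Finset.mem_product, Finset.mem_univ, and_true]
    exact (insertMin_mem_RDbar_iff q.1 hk q.2).symm
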